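/- arXiv:1905.09383 — 3 statements merged into one kernel-verified Lean document; each statement's English description precedes it below -/
import Mathlib

section
/- The DP Successive Elimination algorithm (Algorithm 3) is ε-differentially private: for any two streams of arm-rewards (all rewards in [0,1]) that differ on the reward of a single arm in a single timestep, and any set O of possible sequences of decisions of the algorithm, the probability of producing a decision sequence in O under one stream is at most e^ε times the probability under the neighboring stream. -/
open MeasureTheory ProbabilityTheory

/-- The Laplace distribution `Lap(λ)` on `ℝ`, with density `x ↦ e^{-|x|/λ}/(2λ)` w.r.t.
Lebesgue measure. -/
noncomputable def laplaceMeasure (lam : ℝ) : Measure ℝ :=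
  volume.withDensity fun x => ENNReal.ofReal (Real.exp (-|x| / lam) / (2 * lam))

/-- The gap target `Δ_e = 2^{-e}` of epoch `e` of DP Successive Elimination. -/
noncomputable def seGap (e : ℕ) : ℝ := (2 : ℝ) ^ (-(e : ℝ))

/-- The number of pulls per viable arm in epoch `e` when `s` arms are viable:
`R_e = max(32·log(8s·e²/β)/Δ_e², 8·log(4s·e²/β)/(ε·Δ_e)) + 1`. -/
noncomputable def epochLen (ε β : ℝ) (s e : ℕ) : ℕ :=
  ⌈max (32 * Real.log (8 * (s : ℝ) * (e : ℝ) ^ 2 / β) / seGap e ^ 2)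
      (8 * Real.log (4 * (s : ℝ) * (e : ℝ) ^ 2 / β) / (ε * seGap e))⌉₊ + 1

/-- The state of DP Successive Elimination after `e` epochs, given the reward table `x`
(`x i j` is the reward of the `j`-th pull of arm `i`) and standard-Laplace noises `N`
(`N e i` is the `Lap(1)` noise used for arm `i` in epoch `e`, so that `N e i/(ε·R_e)` is the
`Lap(1/(ε·R_e))` noise of the algorithm): the pair of the viable set `S` and of the number
of pulls so far of each arm. In each epoch the algorithm takes `R_e` fresh rewards per
viable arm, forms noisy means `μ̃_i`, and removes every `j` with
`μ̃_max - μ̃_j > 2h_e + 2c_e`; it stops eliminating once `|S| = 1`. -/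
noncomputable def seState (K : ℕ) (ε β : ℝ) (x : Fin K → ℕ → ℝ) (N : ℕ → Fin K → ℝ) :
    ℕ → Finset (Fin K) × (Fin K → ℕ)
  | 0 => (Finset.univ, fun _ => 0)
  | e + 1 =>
    let prev := seState K ε β x N e
    let S := prev.1
    let used := prev.2
    if h : S.card ≤ 1 then prev
    else
      have hS : S.Nonempty := Finset.card_pos.mp (by omega)
      let n := epochLen ε β S.card (e + 1)
      let noisyMean : Fin K → ℝ := fun i =>
        (∑ j ∈ Finset.range n, x i (used i + j)) / n + N (e + 1) i / (ε * n)
      let he : ℝ := Real.sqrt (Real.log (8 * (S.card : ℝ) * ((e : ℝ) + 1) ^ 2 / β) / (2 * n))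
      let ce : ℝ := Real.log (4 * (S.card : ℝ) * ((e : ℝ) + 1) ^ 2 / β) / (n * ε)
      (S.filter fun j => S.sup' hS noisyMean - noisyMean j ≤ 2 * he + 2 * ce,
       fun i => used i + if i ∈ S then n else 0)

instance (n : ℕ) : MeasurableSpace (Finset (Fin n)) := ⊤

/-!
Changing the reward `x i₀ t₀` only matters in the (at most one) epoch in which arm `i₀` is pulled
for the `t₀`-th time. On the event that this is epoch `e + 1`, shifting the Laplace noise of arm
`i₀` in that epoch by `ε (x i₀ t₀ - x' i₀ t₀)` turns the run on `x` into the run on `x'`; this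
noise is independent of all others and the shift has size at most `ε`, so the shift costs a
factor at most `e^ε` in probability. If the reward is never drawn the two runs coincide, and
summing over the disjoint events gives the bound.
-/

open Function

lemma laplace_density_le_shift (c y : ℝ) :
    ENNReal.ofReal (Real.exp (-|y| / 1) / (2 * 1)) ≤
      ENNReal.ofReal (Real.exp |c|) * ENNReal.ofReal (Real.exp (-|y + c| / 1) / (2 * 1)) := by
  rw [← ENNReal.ofReal_mul (Real.exp_pos _).le, div_one, div_one, ← mul_div_assoc,
    ← Real.exp_add]
  gcongr
  linarith [abs_add_le y c]

lemma lintegral_laplaceMeasure_comp_add_le (g : ℝ → ENNReal) (hg : Measurable g) (c : ℝ) :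
    ∫⁻ y, g (y + c) ∂laplaceMeasure 1 ≤
      ENNReal.ofReal (Real.exp |c|) * ∫⁻ y, g y ∂laplaceMeasure 1 := by
  have hd : Measurable fun y : ℝ => ENNReal.ofReal (Real.exp (-|y| / 1) / (2 * 1)) := by
    fun_prop
  unfold laplaceMeasure
  rw [lintegral_withDensity_eq_lintegral_mul _ hd (g := fun y => g (y + c))
      (hg.comp (measurable_add_const c)), lintegral_withDensity_eq_lintegral_mul _ hd hg]
  conv_rhs =>
    rw [← lintegral_add_right_eq_self _ c, ← lintegral_const_mul' _ _ ENNReal.ofReal_ne_top]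
  refine lintegral_mono fun y => ?_
  simp only [Pi.mul_apply, ← mul_assoc]
  gcongr
  exact laplace_density_le_shift c y

lemma laplaceMeasure_prod_le_of_shift {α : Type*} [MeasurableSpace α] (ν : Measure α) [SFinite ν]
    (c : ℝ) {C C' : Set (ℝ × α)} (hC : MeasurableSet C) (hC' : MeasurableSet C')
    (hshift : ∀ y z, (y, z) ∈ C → (y + c, z) ∈ C') :
    ((laplaceMeasure 1).prod ν) C ≤
      ENNReal.ofReal (Real.exp |c|) * ((laplaceMeasure 1).prod ν) C' := by
  rw [Measure.prod_apply hC, Measure.prod_apply hC']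
  calc ∫⁻ y, ν (Prod.mk y ⁻¹' C) ∂laplaceMeasure 1
      ≤ ∫⁻ y, ν (Prod.mk (y + c) ⁻¹' C') ∂laplaceMeasure 1 :=
        lintegral_mono fun y => measure_mono fun z => hshift y z
    _ ≤ _ := lintegral_laplaceMeasure_comp_add_le _ (measurable_measure_prodMk_left hC') c

theorem ProbabilityTheory.iIndepFun.indepFun_update {ι Ω β : Type*} [DecidableEq ι]
    [MeasurableSpace Ω] [MeasurableSpace β] {P : Measure Ω} {X : ι → Ω → β}
    (hXm : ∀ i, Measurable (X i)) (hX : iIndepFun X P) (i : ι) (b : β) :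
    IndepFun (X i) (fun ω => update (fun j => X j ω) i b) P := by
  have hindep := indep_biSup_compl (fun j => (hXm j).comap_le) hX {i}
  refine indep_of_indep_of_le_right (indep_of_indep_of_le_left hindep ?_) ?_
  · exact le_iSup₂ (f := fun j (_ : j ∈ ({i} : Set ι)) => MeasurableSpace.comap (X j) _) i rfl
  · let _ : MeasurableSpace Ω := ⨆ j ∈ ({i} : Set ι)ᶜ, MeasurableSpace.comap (X j) ‹_›
    refine Measurable.comap_le (measurable_pi_lambda _ fun j => ?_)
    rcases eq_or_ne j i with rfl | hj
    · simp
    · simp only [update_of_ne hj]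
      exact Measurable.of_comap_le
        (le_iSup₂ (f := fun j (_ : j ∈ ({i} : Set ι)ᶜ) => MeasurableSpace.comap (X j) _) j hj)

theorem measure_preimage_le_of_update_add {ι Ω : Type*} [DecidableEq ι] [MeasurableSpace Ω]
    {P : Measure Ω} {X : ι → Ω → ℝ} (hXm : ∀ i, Measurable (X i))
    (hX : iIndepFun X P) {i : ι} (hXi : P.map (X i) = laplaceMeasure 1) (c : ℝ)
    {A B : Set (ι → ℝ)} (hA : MeasurableSet A) (hB : MeasurableSet B)
    (hAB : ∀ v ∈ A, update v i (v i + c) ∈ B) :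
    P ((fun ω j => X j ω) ⁻¹' A) ≤
      ENNReal.ofReal (Real.exp |c|) * P ((fun ω j => X j ω) ⁻¹' B) := by
  have := hX.isProbabilityMeasure
  -- Erasing the `i`-th coordinate makes the vector independent of `X i`.
  set Z : Ω → ι → ℝ := fun ω => update (fun j => X j ω) i 0
  have hZ : Measurable Z := measurable_pi_lambda _ fun j => by
    rcases eq_or_ne j i with rfl | hj
    · simp [Z]
    · simpa [Z, update_of_ne hj] using hXm j
  have hlaw : P.map (fun ω => (X i ω, Z ω)) = (laplaceMeasure 1).prod (P.map Z) := by
    rw [(indepFun_iff_map_prod_eq_prod_map_map (hXm i).aemeasurable hZ.aemeasurable).mp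
      (hX.indepFun_update hXm i 0), hXi]
  have hglue : Measurable fun q : ℝ × (ι → ℝ) => update q.2 i q.1 := by fun_prop
  have hsplit : ∀ S, MeasurableSet S → P ((fun ω j => X j ω) ⁻¹' S) =
      (laplaceMeasure 1).prod (P.map Z) ((fun q : ℝ × (ι → ℝ) => update q.2 i q.1) ⁻¹' S) := by
    intro S hS
    rw [← hlaw, Measure.map_apply ((hXm i).prodMk hZ) (hglue hS)]
    congr 1
    ext ω
    simp [Z]
  rw [hsplit A hA, hsplit B hB]
  exact laplaceMeasure_prod_le_of_shift _ c (hglue hA) (hglue hB) fun y z h => by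
    simpa using hAB _ h

lemma measure_le_mul_of_iUnion_disjoint {α : Type*} [MeasurableSpace α] (μ : Measure α)
    {A : ℕ → Set α} (hA : ∀ n, MeasurableSet (A n)) (hAd : Pairwise (Disjoint on A))
    {E F : Set α} (hF : MeasurableSet F) {r : ENNReal} (hr : 1 ≤ r)
    (hpiece : ∀ n, μ (E ∩ A n) ≤ r * μ (F ∩ A n)) (hrest : E \ ⋃ n, A n ⊆ F) :
    μ E ≤ r * μ F := by
  have hF_split : μ F = ∑' n, μ (F ∩ A n) + μ (F \ ⋃ n, A n) := by
    rw [← measure_iUnion (fun m n hmn => (hAd hmn).mono Set.inter_subset_right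
      Set.inter_subset_right) fun n => hF.inter (hA n), ← Set.inter_iUnion,
      measure_inter_add_sdiff _ (MeasurableSet.iUnion hA)]
  calc μ E ≤ μ (E ∩ ⋃ n, A n) + μ (E \ ⋃ n, A n) := measure_le_inter_add_sdiff _ _ _
    _ ≤ ∑' n, μ (E ∩ A n) + μ (F \ ⋃ n, A n) := by
        rw [Set.inter_iUnion]
        exact add_le_add (measure_iUnion_le _)
          (measure_mono fun a ha => ⟨hrest ha, ha.2⟩)
    _ ≤ ∑' n, r * μ (F ∩ A n) + r * μ (F \ ⋃ n, A n) :=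
        add_le_add (ENNReal.tsum_le_tsum hpiece) (le_mul_of_one_le_left zero_le hr)
    _ = r * μ F := by rw [hF_split, ENNReal.tsum_mul_left, mul_add]

lemma sum_range_add_eq_add_ite {α : Type*} [DecidableEq α] {x x' : α → ℕ → ℝ} {i0 : α} {t0 : ℕ}
    (hd : ∀ i t, ¬(i = i0 ∧ t = t0) → x i t = x' i t) (i : α) (u n : ℕ) :
    ∑ j ∈ Finset.range n, x i (u + j) = ∑ j ∈ Finset.range n, x' i (u + j) +
      if i = i0 ∧ u ≤ t0 ∧ t0 < u + n then x i0 t0 - x' i0 t0 else 0 := by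
  rw [← sub_eq_iff_eq_add', ← Finset.sum_sub_distrib]
  split_ifs with h
  · obtain ⟨rfl, hu, hun⟩ := h
    rw [Finset.sum_eq_single_of_mem (t0 - u) (Finset.mem_range.mpr (by omega)),
      Nat.add_sub_cancel' hu]
    intro j _ hj
    rw [hd _ _ (by omega), sub_self]
  · refine Finset.sum_eq_zero fun j hj => ?_
    rw [hd _ _ fun h' => h ⟨h'.1, by simp at hj; omega⟩, sub_self]

section SuccessiveElimination

variable {K : ℕ} {ε β : ℝ}

noncomputable def seNoisyMean (K : ℕ) (ε β : ℝ) (x : Fin K → ℕ → ℝ) (e : ℕ)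
    (p : Finset (Fin K) × (Fin K → ℕ)) (v : Fin K → ℝ) (i : Fin K) : ℝ :=
  (∑ j ∈ Finset.range (epochLen ε β p.1.card (e + 1)), x i (p.2 i + j)) /
      (epochLen ε β p.1.card (e + 1) : ℕ) +
    v i / (ε * (epochLen ε β p.1.card (e + 1) : ℕ))

noncomputable def seStep (K : ℕ) (ε β : ℝ) (x : Fin K → ℕ → ℝ) (e : ℕ)
    (p : Finset (Fin K) × (Fin K → ℕ)) (v : Fin K → ℝ) : Finset (Fin K) × (Fin K → ℕ) :=
  if h : p.1.card ≤ 1 then p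
  else
    have hS : p.1.Nonempty := Finset.card_pos.mp (by omega)
    let n := epochLen ε β p.1.card (e + 1)
    let he : ℝ := Real.sqrt (Real.log (8 * (p.1.card : ℝ) * ((e : ℝ) + 1) ^ 2 / β) / (2 * n))
    let ce : ℝ := Real.log (4 * (p.1.card : ℝ) * ((e : ℝ) + 1) ^ 2 / β) / (n * ε)
    (p.1.filter fun j =>
        p.1.sup' hS (seNoisyMean K ε β x e p v) - seNoisyMean K ε β x e p v j ≤ 2 * he + 2 * ce,
     fun i => p.2 i + if i ∈ p.1 then n else 0)

lemma seState_succ (x : Fin K → ℕ → ℝ) (M : ℕ → Fin K → ℝ) (e : ℕ) :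
    seState K ε β x M (e + 1) = seStep K ε β x e (seState K ε β x M e) (M (e + 1)) := rfl

/-- Epoch `e + 1`, run from the state `p`, pulls arm `i` for the `t`-th time (counting from `0`). -/
def DrawsReward (ε β : ℝ) (e : ℕ) (p : Finset (Fin K) × (Fin K → ℕ)) (i : Fin K) (t : ℕ) :
    Prop :=
  1 < p.1.card ∧ i ∈ p.1 ∧ p.2 i ≤ t ∧ t < p.2 i + epochLen ε β p.1.card (e + 1)

noncomputable instance (e : ℕ) (p : Finset (Fin K) × (Fin K → ℕ)) (i : Fin K) (t : ℕ) :
    Decidable (DrawsReward ε β e p i t) := by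
  unfold DrawsReward
  infer_instance

lemma seStep_eq_of_noise_shift {x x' : Fin K → ℕ → ℝ} {i0 : Fin K} {t0 : ℕ}
    (hd : ∀ i t, ¬(i = i0 ∧ t = t0) → x i t = x' i t) (hε : ε ≠ 0) (e : ℕ)
    (p : Finset (Fin K) × (Fin K → ℕ)) {v v' : Fin K → ℝ}
    (hv : ∀ i, v' i = v i +
      if i = i0 ∧ DrawsReward ε β e p i0 t0 then ε * (x i0 t0 - x' i0 t0) else 0) :
    seStep K ε β x e p v = seStep K ε β x' e p v' := by
  by_cases hcard : p.1.card ≤ 1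
  · simp only [seStep, dif_pos hcard]
  have hmean : ∀ i ∈ p.1, seNoisyMean K ε β x e p v i = seNoisyMean K ε β x' e p v' i := by
    intro i hi
    have hn : (epochLen ε β p.1.card (e + 1) : ℝ) ≠ 0 := Nat.cast_ne_zero.mpr (Nat.succ_ne_zero _)
    have hdraw : (i = i0 ∧ DrawsReward ε β e p i0 t0) ↔
        (i = i0 ∧ p.2 i ≤ t0 ∧ t0 < p.2 i + epochLen ε β p.1.card (e + 1)) := by
      constructor
      · rintro ⟨rfl, -, -, h⟩
        exact ⟨rfl, h⟩
      · rintro ⟨rfl, h⟩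
        exact ⟨rfl, by omega, hi, h⟩
    rw [seNoisyMean, seNoisyMean, sum_range_add_eq_add_ite hd, hv, if_congr hdraw rfl rfl]
    split_ifs
    · field_simp
      ring
    · simp
  simp only [seStep, dif_neg hcard]
  have hS : p.1.Nonempty := Finset.card_pos.mp (by omega)
  rw [Finset.sup'_congr hS rfl hmean]
  exact Prod.ext (Finset.filter_congr fun j hj => by rw [hmean j hj]) rfl

lemma seState_eq_of_noise_shift {x x' : Fin K → ℕ → ℝ} {i0 : Fin K} {t0 : ℕ}
    (hd : ∀ i t, ¬(i = i0 ∧ t = t0) → x i t = x' i t) (hε : ε ≠ 0) {M M' : ℕ → Fin K → ℝ}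
    (hM : ∀ k i, M' (k + 1) i = M (k + 1) i +
      if i = i0 ∧ DrawsReward ε β k (seState K ε β x M k) i0 t0
      then ε * (x i0 t0 - x' i0 t0) else 0) (k : ℕ) :
    seState K ε β x M k = seState K ε β x' M' k := by
  induction k with
  | zero => rfl
  | succ k ih =>
    rw [seState_succ, seState_succ, ← ih]
    exact seStep_eq_of_noise_shift hd hε k _ (hM k)

lemma seState_congr_noise (x : Fin K → ℕ → ℝ) {M M' : ℕ → Fin K → ℝ} {k : ℕ}
    (h : ∀ e ≤ k, M e = M' e) : seState K ε β x M k = seState K ε β x M' k := by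
  induction k with
  | zero => rfl
  | succ k ih =>
    rw [seState_succ, seState_succ, ih fun e he => h e (by omega), h (k + 1) le_rfl]

lemma seState_pulls_monotone (x : Fin K → ℕ → ℝ) (M : ℕ → Fin K → ℝ) (i : Fin K) :
    Monotone fun e => (seState K ε β x M e).2 i := by
  refine monotone_nat_of_le_succ fun e => ?_
  rw [seState_succ, seStep]
  split
  · exact le_rfl
  · exact Nat.le_add_right _ _

lemma DrawsReward.seState_succ_pulls {x : Fin K → ℕ → ℝ} {M : ℕ → Fin K → ℝ} {e : ℕ}
    {i : Fin K} {t : ℕ} (h : DrawsReward ε β e (seState K ε β x M e) i t) :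
    (seState K ε β x M (e + 1)).2 i =
      (seState K ε β x M e).2 i + epochLen ε β (seState K ε β x M e).1.card (e + 1) := by
  rw [seState_succ, seStep, dif_neg (by have := h.1; omega)]
  simp [h.2.1]

lemma DrawsReward.epoch_unique {x : Fin K → ℕ → ℝ} {M : ℕ → Fin K → ℝ} {a b : ℕ}
    {i : Fin K} {t : ℕ} (ha : DrawsReward ε β a (seState K ε β x M a) i t)
    (hb : DrawsReward ε β b (seState K ε β x M b) i t) : a = b := by
  wlog hab : a < b generalizing a b
  · rcases lt_or_eq_of_le (not_lt.mp hab) with h | h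
    · exact (this hb ha h).symm
    · exact h.symm
  have hsucc := ha.seState_succ_pulls
  have hmono := seState_pulls_monotone (ε := ε) (β := β) x M i (show a + 1 ≤ b by omega)
  have hlast := ha.2.2.2
  have hfirst := hb.2.2.1
  simp only at hmono
  omega

noncomputable def seDecisions (K : ℕ) (ε β : ℝ) (x : Fin K → ℕ → ℝ) (v : ℕ × Fin K → ℝ) :
    ℕ → Finset (Fin K) :=
  fun e => (seState K ε β x (curry v) e).1

lemma seDecisions_eq_of_forall_not_drawsReward {x x' : Fin K → ℕ → ℝ} {i0 : Fin K} {t0 : ℕ}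
    (hd : ∀ i t, ¬(i = i0 ∧ t = t0) → x i t = x' i t) (hε : ε ≠ 0) {v : ℕ × Fin K → ℝ}
    (h : ∀ e, ¬DrawsReward ε β e (seState K ε β x (curry v) e) i0 t0) :
    seDecisions K ε β x' v = seDecisions K ε β x v :=
  funext fun k =>
    congrArg Prod.fst (seState_eq_of_noise_shift hd hε (fun k i => by simp [h k]) k).symm

lemma seState_curry_update_of_le (x : Fin K → ℕ → ℝ) (v : ℕ × Fin K → ℝ) {e k : ℕ}
    (hk : k ≤ e) (i : Fin K) (a : ℝ) :
    seState K ε β x (curry (update v (e + 1, i) a)) k = seState K ε β x (curry v) k :=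
  seState_congr_noise x fun e' he' => funext fun j =>
    update_of_ne (by simp only [ne_eq, Prod.mk.injEq]; omega) _ _

lemma seDecisions_update_of_drawsReward {x x' : Fin K → ℕ → ℝ} {i0 : Fin K} {t0 : ℕ}
    (hd : ∀ i t, ¬(i = i0 ∧ t = t0) → x i t = x' i t) (hε : ε ≠ 0) {v : ℕ × Fin K → ℝ}
    {e : ℕ} (h : DrawsReward ε β e (seState K ε β x (curry v) e) i0 t0) :
    seDecisions K ε β x' (update v (e + 1, i0) (v (e + 1, i0) + ε * (x i0 t0 - x' i0 t0))) =
      seDecisions K ε β x v := by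
  funext k
  refine congrArg Prod.fst (seState_eq_of_noise_shift hd hε (fun k i => ?_) k).symm
  rcases eq_or_ne i i0 with rfl | hi
  · by_cases hk : k = e
    · subst hk
      simp [h]
    · have hk' : ¬DrawsReward ε β k (seState K ε β x (curry v) k) i t0 :=
        fun h' => hk (h'.epoch_unique h)
      simp [hk, hk']
  · simp [hi]

lemma measurable_finset_filter {α : Type*} [MeasurableSpace α] {n : ℕ} (S : Finset (Fin n))
    {P : α → Fin n → Prop} [∀ a, DecidablePred (P a)] (hP : ∀ j, MeasurableSet {a | P a j}) :
    Measurable fun a => S.filter (P a) := by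
  refine measurable_to_countable' fun T => ?_
  have hpre : (fun a => S.filter (P a)) ⁻¹' {T} = ⋂ j, {a | j ∈ S.filter (P a) ↔ j ∈ T} := by
    ext
    simp [Finset.ext_iff]
  rw [hpre]
  refine MeasurableSet.iInter fun j => measurableSet_setOfPred.mpr ?_
  simp only [Finset.mem_filter]
  exact (measurable_const.and (measurableSet_setOfPred.mp (hP j))).iff measurable_const

lemma measurable_seStep (x : Fin K → ℕ → ℝ) (e : ℕ) (p : Finset (Fin K) × (Fin K → ℕ)) :
    Measurable (seStep K ε β x e p) := by
  unfold seStep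
  by_cases hc : p.1.card ≤ 1
  · simp only [dif_pos hc]
    exact measurable_const
  simp only [dif_neg hc]
  have hS : p.1.Nonempty := Finset.card_pos.mp (by omega)
  have hmean : ∀ i, Measurable fun v => seNoisyMean K ε β x e p v i := fun i =>
    measurable_const.add ((measurable_pi_apply i).div_const _)
  have hmax : Measurable fun v => p.1.sup' hS (seNoisyMean K ε β x e p v) := by
    convert Finset.measurable_sup' hS fun i _ => hmean i using 1
    exact funext fun v => (Finset.sup'_apply hS (fun i v => seNoisyMean K ε β x e p v i) v).symm
  exact (measurable_finset_filter _ fun j =>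
    measurableSet_le (hmax.sub (hmean j)) measurable_const).prodMk measurable_const

lemma measurable_seState (x : Fin K → ℕ → ℝ) (e : ℕ) :
    Measurable fun M : ℕ → Fin K → ℝ => seState K ε β x M e := by
  induction e with
  | zero => exact measurable_const
  | succ e ih =>
    exact (measurable_from_prod_countable_right (f := fun q => seStep K ε β x e q.1 q.2)
      fun p => measurable_seStep x e p).comp (ih.prodMk (measurable_pi_apply (e + 1)))

lemma measurable_seDecisions (x : Fin K → ℕ → ℝ) : Measurable (seDecisions K ε β x) :=
  measurable_pi_lambda _ fun e =>
    measurable_fst.comp ((measurable_seState x e).comp measurable_curry)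

lemma measurableSet_drawsReward (x : Fin K → ℕ → ℝ) (e : ℕ) (i : Fin K) (t : ℕ) :
    MeasurableSet {v : ℕ × Fin K → ℝ | DrawsReward ε β e (seState K ε β x (curry v) e) i t} :=
  ((measurable_seState x e).comp measurable_curry)
    (MeasurableSet.of_discrete (s := {p | DrawsReward ε β e p i t}))

end SuccessiveElimination

theorem stmt7_general {Ω : Type*} [MeasureSpace Ω]
    (K : ℕ) (ε β : ℝ) (hε : 0 < ε)
    (N : ℕ → Fin K → Ω → ℝ)
    (hNm : ∀ e i, Measurable (N e i))
    (hNlaw : ∀ e i, Measure.map (N e i) ℙ = laplaceMeasure 1)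
    (hNindep : iIndepFun (fun p : ℕ × Fin K => N p.1 p.2) ℙ) :
    ∀ x x' : Fin K → ℕ → ℝ,
      (∀ i t, x i t ∈ Set.Icc (0 : ℝ) 1) → (∀ i t, x' i t ∈ Set.Icc (0 : ℝ) 1) →
      (∃ i0 t0, ∀ i t, ¬(i = i0 ∧ t = t0) → x i t = x' i t) →
      ∀ O : Set (ℕ → Finset (Fin K)), MeasurableSet O →
        ℙ {ω | (fun e => (seState K ε β x (fun e' i => N e' i ω) e).1) ∈ O} ≤
          ENNReal.ofReal (Real.exp ε) *
            ℙ {ω | (fun e => (seState K ε β x' (fun e' i => N e' i ω) e).1) ∈ O} := by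
  intro x x' hx hx' ⟨i0, t0, hd⟩ O hO
  have hδ : |ε * (x i0 t0 - x' i0 t0)| ≤ ε := by
    rw [abs_mul, abs_of_pos hε]
    exact mul_le_of_le_one_right hε.le (Real.dist_le_of_mem_Icc_01 (hx i0 t0) (hx' i0 t0))
  have hNm' : ∀ p : ℕ × Fin K, Measurable (N p.1 p.2) := fun p => hNm _ _
  let noise : Ω → ℕ × Fin K → ℝ := fun ω p => N p.1 p.2 ω
  have hnoise : Measurable noise := measurable_pi_lambda _ hNm'
  change ℙ (noise ⁻¹' (seDecisions K ε β x ⁻¹' O)) ≤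
    _ * ℙ (noise ⁻¹' (seDecisions K ε β x' ⁻¹' O))
  refine measure_le_mul_of_iUnion_disjoint ℙ
    (A := fun e => noise ⁻¹' {v | DrawsReward ε β e (seState K ε β x (curry v) e) i0 t0})
    (fun e => hnoise (measurableSet_drawsReward x e i0 t0)) ?_
    (hnoise (measurable_seDecisions x' hO)) (ENNReal.one_le_ofReal.mpr (Real.one_le_exp hε.le))
    (fun e => ?_) ?_
  · exact fun a b hab => Set.disjoint_left.mpr fun ω ha hb => hab (ha.epoch_unique hb)
  · refine (measure_preimage_le_of_update_add (i := (e + 1, i0)) hNm' hNindep (hNlaw _ _) _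
      ((measurable_seDecisions x hO).inter (measurableSet_drawsReward x e i0 t0))
      ((measurable_seDecisions x' hO).inter (measurableSet_drawsReward x e i0 t0)) ?_).trans
      (mul_le_mul_left (ENNReal.ofReal_le_ofReal (Real.exp_le_exp.mpr hδ)) _)
    rintro v ⟨hvO, hv⟩
    refine ⟨?_, ?_⟩
    · rwa [Set.mem_preimage, seDecisions_update_of_drawsReward hd hε.ne' hv]
    · rwa [Set.mem_ofPred_eq, seState_curry_update_of_le x v le_rfl]
  · rintro ω ⟨hω, hnot⟩
    simp only [Set.mem_iUnion, not_exists] at hnot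
    rwa [Set.mem_preimage, Set.mem_preimage,
      seDecisions_eq_of_forall_not_drawsReward hd hε.ne' hnot]

/-- Theorem 5: DP Successive Elimination is `ε`-differentially private. For any two reward
tables with entries in `[0,1]` differing on the reward of a single arm at a single
timestep, and any measurable set `O` of decision sequences (the sequence of viable sets
produced by the algorithm), the probability (over the independent standard-Laplace noises)
of producing a decision sequence in `O` under one table is at most `e^ε` times the
probability under the other. -/
theorem stmt7 {Ω : Type*} [MeasureSpace Ω] [IsProbabilityMeasure (ℙ : Measure Ω)]
    (K : ℕ) (hK : 0 < K) (ε β : ℝ) (hε : 0 < ε) (hβ0 : 0 < β) (hβ1 : β < 1)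
    (N : ℕ → Fin K → Ω → ℝ)
    (hNm : ∀ e i, Measurable (N e i))
    (hNlaw : ∀ e i, Measure.map (N e i) ℙ = laplaceMeasure 1)
    (hNindep : iIndepFun (fun p : ℕ × Fin K => N p.1 p.2) ℙ) :
    ∀ x x' : Fin K → ℕ → ℝ,
      (∀ i t, x i t ∈ Set.Icc (0 : ℝ) 1) → (∀ i t, x' i t ∈ Set.Icc (0 : ℝ) 1) →
      (∃ i0 t0, ∀ i t, ¬(i = i0 ∧ t = t0) → x i t = x' i t) →
      ∀ O : Set (ℕ → Finset (Fin K)), MeasurableSet O →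
        ℙ {ω | (fun e => (seState K ε β x (fun e' i => N e' i ω) e).1) ∈ O} ≤
          ENNReal.ofReal (Real.exp ε) *
            ℙ {ω | (fun e => (seState K ε β x' (fun e' i => N e' i ω) e).1) ∈ O} :=
  stmt7_general K ε β hε N hNm hNlaw hNindep
end

section
/- Let α ∈ (0,1), let μ, X̄ ∈ ℝ, and let h, c, B, A, L, t be reals with t > 0. Suppose (i) |X̄ − μ| ≤ h, (ii) c ≥ |B| + |A| + |L|/α, and (iii) |X̄| ≥ h·(1 + 1/α) + (c + B + A)/t. Then |X̄ + L/t − μ| ≤ α·|μ|. -/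
/-- Deterministic correctness chain of Theorem 1 (DP-NAS): if the empirical mean `Xbar` is
`h`-close to `μ`, the compensation term `c` dominates the noise magnitudes
`|B| + |A| + |L|/α`, and the halting condition
`|Xbar| ≥ h·(1 + 1/α) + (c + B + A)/t` holds, then the released value `Xbar + L/t` is a
multiplicative `(1 ± α)`-approximation of `μ`. -/
theorem stmt12 (α μ Xbar h c B A L t : ℝ) (hα0 : 0 < α) (hα1 : α < 1) (ht : 0 < t)
    (h1 : |Xbar - μ| ≤ h) (h2 : |B| + |A| + |L| / α ≤ c)
    (h3 : h * (1 + 1 / α) + (c + B + A) / t ≤ |Xbar|) :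
    |Xbar + L / t - μ| ≤ α * |μ| := by
  have htri : |Xbar + L / t - μ| ≤ |Xbar - μ| + |L| / t := by
    have := abs_add_le (Xbar - μ) (L / t)
    have hL : |L / t| = |L| / t := by
      rw [abs_div, abs_of_pos ht]
    calc |Xbar + L / t - μ| = |(Xbar - μ) + L / t| := by ring_nf
      _ ≤ |Xbar - μ| + |L / t| := abs_add_le _ _
      _ = |Xbar - μ| + |L| / t := by rw [hL]
  have hmu : |Xbar| - h ≤ |μ| := by
    have := abs_sub_abs_le_abs_sub Xbar μ
    linarith
  have hB : -|B| ≤ B := neg_abs_le B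
  have hA : -|A| ≤ A := neg_abs_le A
  have hcBA : |L| / α ≤ c + B + A := by linarith
  -- α * |μ| ≥ α*(h/α + (c+B+A)/t) = h + α*(c+B+A)/t ≥ h + |L|/t
  have hμlb : h * (1 / α) + (c + B + A) / t ≤ |μ| := by linarith
  have key : h + |L| / t ≤ α * |μ| := by
    have h4 : α * (h * (1 / α) + (c + B + A) / t) ≤ α * |μ| :=
      mul_le_mul_of_nonneg_left hμlb hα0.le
    have h5 : α * (h * (1 / α)) = h := by field_simp
    have h6 : |L| / t ≤ α * ((c + B + A) / t) := by
      have hLa : |L| ≤ α * (c + B + A) := by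
        have := mul_le_mul_of_nonneg_left hcBA hα0.le
        have h7 : α * (|L| / α) = |L| := by field_simp
        linarith
      calc |L| / t ≤ (α * (c + B + A)) / t := by gcongr
        _ = α * ((c + B + A) / t) := by ring
    nlinarith
  linarith
end

section
/- Fix an epoch e of DP Successive Elimination with viable set S, parameters h_e, c_e > 0 satisfying 2h_e + 2c_e < Δ_e/2 where Δ_e = 2^{−e}. Suppose that for every arm a ∈ S the noisy mean satisfies |μ̃_a − μ_a| ≤ h_e + c_e, and that the optimal arm a* (the arm of largest true mean μ_{a*}) belongs to S. Let μ̃_max = max_{i∈S} μ̃_i. Then: (i) μ̃_max − μ̃_{a*} ≤ 2h_e + 2c_e, so the elimination rule does not remove a*; and (ii) for every arm a ∈ S with true gap Δ_a := μ_{a*} − μ_a ≥ Δ_e, it holds that μ̃_max − μ̃_a > 2h_e + 2c_e, so the elimination rule removes a. -/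
/-- Deterministic elimination claim used in the proof of Lemma 6: in an epoch `e` of DP
Successive Elimination with viable set `S`, if `2h_e + 2c_e < Δ_e/2` where `Δ_e = 2^{-e}`,
every noisy mean is `(h_e + c_e)`-accurate, and the optimal arm `a*` belongs to `S`, then
(i) `μ̃_max - μ̃_{a*} ≤ 2h_e + 2c_e`, so `a*` is not removed, and (ii) every viable arm with
true gap at least `Δ_e` satisfies `μ̃_max - μ̃_a > 2h_e + 2c_e`, so it is removed. -/
theorem stmt19 {A : Type*} (S : Finset A) (hS : S.Nonempty) (e : ℕ)
    (he ce : ℝ) (hhe : 0 < he) (hce : 0 < ce)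
    (μ μt : A → ℝ)
    (hsmall : 2 * he + 2 * ce < (2 : ℝ) ^ (-(e : ℝ)) / 2)
    (hacc : ∀ a ∈ S, |μt a - μ a| ≤ he + ce)
    (astar : A) (hastarS : astar ∈ S) (hopt : ∀ a : A, μ a ≤ μ astar) :
    (S.sup' hS μt - μt astar ≤ 2 * he + 2 * ce) ∧
    (∀ a ∈ S, (2 : ℝ) ^ (-(e : ℝ)) ≤ μ astar - μ a →
      2 * he + 2 * ce < S.sup' hS μt - μt a) := by
  have hstar := abs_le.mp (hacc astar hastarS)
  constructor
  · obtain ⟨i, hiS, hieq⟩ := S.exists_mem_eq_sup' hS μt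
    have hi := abs_le.mp (hacc i hiS)
    have := hopt i
    rw [hieq]
    linarith [hi.2, hstar.1]
  · intro a haS hgap
    have ha := abs_le.mp (hacc a haS)
    have hle : μt astar ≤ S.sup' hS μt := Finset.le_sup' μt hastarS
    linarith [hstar.1, ha.2]
end
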